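/- Let ρ ∈ ℝ with ρ ≠ 0 and ρ ≠ 1, set κ := 2(ρ³−1)/ρ³, fix b ∈ ℝ, and write z₁ := κt + b and z₂ := y/ρ − x. Let w : ℝ² → ℝ be a smooth solution of the reduced equation and c₅ ∈ ℝ. Then: (a) the function u(t,x,y) := w(z₁, z₂ + c₅z₁) − (c₅/2)z₂² is a smooth solution of the dispersionless Nyzhnyk equation on ℝ³; and (b) the function u(t,x,y) := −z₁·w(1/z₁, z₂/z₁ + c₅) + z₂³/(6z₁) is a smooth solution of the dispersionless Nyzhnyk equation on the open set {(t,x,y) : κt + b ≠ 0}. -/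

import Mathlib

/-- First-coordinate partial derivative of a function on `ℝ²`. -/
noncomputable def d1 (f : ℝ × ℝ → ℝ) (p : ℝ × ℝ) : ℝ := deriv (fun s => f (s, p.2)) p.1

/-- Second-coordinate partial derivative of a function on `ℝ²`. -/
noncomputable def d2 (f : ℝ × ℝ → ℝ) (p : ℝ × ℝ) : ℝ := deriv (fun s => f (p.1, s)) p.2

/-- `w` is a smooth solution of the reduced equation `∂₁∂₂²w + (∂₂²w)·(∂₂³w) = 0` on `U`. -/
def IsRedSolOn (w : ℝ × ℝ → ℝ) (U : Set (ℝ × ℝ)) : Prop :=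
  ContDiffOn ℝ (⊤ : ℕ∞) w U ∧
    ∀ p ∈ U, d1 (d2 (d2 w)) p + d2 (d2 w) p * d2 (d2 (d2 w)) p = 0

/-- `h` is a smooth solution of the inviscid Burgers equation `∂₁h + h·∂₂h = 0` on `U`. -/
def IsBurgersSolOn (h : ℝ × ℝ → ℝ) (U : Set (ℝ × ℝ)) : Prop :=
  ContDiffOn ℝ (⊤ : ℕ∞) h U ∧ ∀ p ∈ U, d1 h p + h p * d2 h p = 0

/-- Partial derivative with respect to `t` of a function on `ℝ³ = ℝ_t × ℝ_x × ℝ_y`. -/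
noncomputable def Dt (f : ℝ × ℝ × ℝ → ℝ) (p : ℝ × ℝ × ℝ) : ℝ :=
  deriv (fun s => f (s, p.2.1, p.2.2)) p.1

/-- Partial derivative with respect to `x`. -/
noncomputable def Dx (f : ℝ × ℝ × ℝ → ℝ) (p : ℝ × ℝ × ℝ) : ℝ :=
  deriv (fun s => f (p.1, s, p.2.2)) p.2.1

/-- Partial derivative with respect to `y`. -/
noncomputable def Dy (f : ℝ × ℝ × ℝ → ℝ) (p : ℝ × ℝ × ℝ) : ℝ :=
  deriv (fun s => f (p.1, p.2.1, s)) p.2.2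

/-- `u` is a smooth solution of the dispersionless Nyzhnyk equation
`u_txy = (u_xx·u_xy)_x + (u_xy·u_yy)_y` on `D`. -/
def IsDNSolOn (u : ℝ × ℝ × ℝ → ℝ) (D : Set (ℝ × ℝ × ℝ)) : Prop :=
  ContDiffOn ℝ (⊤ : ℕ∞) u D ∧
    ∀ p ∈ D, Dt (Dx (Dy u)) p =
      Dx (fun q => Dx (Dx u) q * Dx (Dy u) q) p +
        Dy (fun q => Dx (Dy u) q * Dy (Dy u) q) p

/-!
In the variables `z₁ = κt + b`, `z₂ = y/ρ - x` a function `u = F(z₁, z₂)` has `u_x = -∂₂F`,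
`u_y = ∂₂F/ρ` and `u_t = κ ∂₁F`, so with `h = ∂₂²F` the dispersionless Nyzhnyk equation reads
`-(κ/ρ) ∂₁h = 2(1/ρ - 1/ρ⁴) h ∂₂h`. For `κ = 2(ρ³ - 1)/ρ³` this is a multiple of the inviscid
Burgers equation `∂₁h + h ∂₂h = 0`, which is the reduced equation for `F`. The two families come
from two point symmetries of Burgers, the Galilean boost `h ↦ h(z₁, z₂ + c z₁) - c` and the
inversion `h ↦ (z₂ - h(1/z₁, z₂/z₁ + c))/z₁`, lifted to `F` by integrating twice in `z₂`.
-/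

open Set Filter

section PartialDerivatives

variable {f g : ℝ × ℝ → ℝ} {z : ℝ × ℝ} {U : Set (ℝ × ℝ)}

lemma d1_eq_fderiv (hf : DifferentiableAt ℝ f z) : d1 f z = fderiv ℝ f z (1, 0) :=
  (hf.hasFDerivAt.comp_hasDerivAt z.1
    ((hasDerivAt_id z.1).prodMk (hasDerivAt_const z.1 z.2))).deriv

lemma d2_eq_fderiv (hf : DifferentiableAt ℝ f z) : d2 f z = fderiv ℝ f z (0, 1) :=
  (hf.hasFDerivAt.comp_hasDerivAt z.2
    ((hasDerivAt_const z.2 z.1).prodMk (hasDerivAt_id z.2))).deriv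

lemma hasDerivAt_comp_prodMk {a b : ℝ → ℝ} {a' b' s : ℝ} (hf : DifferentiableAt ℝ f (a s, b s))
    (ha : HasDerivAt a a' s) (hb : HasDerivAt b b' s) :
    HasDerivAt (fun t => f (a t, b t)) (a' * d1 f (a s, b s) + b' * d2 f (a s, b s)) s := by
  refine (hf.hasFDerivAt.comp_hasDerivAt s (ha.prodMk hb)).congr_deriv ?_
  rw [d1_eq_fderiv hf, d2_eq_fderiv hf,
    show (a', b') = a' • ((1 : ℝ), (0 : ℝ)) + b' • (0, 1) by simp,
    map_add, map_smul, map_smul, smul_eq_mul, smul_eq_mul]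

lemma DifferentiableAt.hasDerivAt_d2 (hf : DifferentiableAt ℝ f z) :
    HasDerivAt (fun s => f (z.1, s)) (d2 f z) z.2 := by
  simpa using hasDerivAt_comp_prodMk hf (hasDerivAt_const z.2 z.1) (hasDerivAt_id z.2)

lemma d1_smul (c : ℝ) (f : ℝ × ℝ → ℝ) : d1 (c • f) = c • d1 f :=
  funext fun _ => deriv_const_smul_field c _

lemma d2_smul (c : ℝ) (f : ℝ × ℝ → ℝ) : d2 (c • f) = c • d2 f :=
  funext fun _ => deriv_const_smul_field c _

lemma d1_neg (f : ℝ × ℝ → ℝ) : d1 (-f) = -d1 f :=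
  funext fun _ => deriv.neg

lemma d2_neg (f : ℝ × ℝ → ℝ) : d2 (-f) = -d2 f :=
  funext fun _ => deriv.neg

lemma d2_mul_self (hf : DifferentiableAt ℝ f z) : d2 (f * f) z = 2 * f z * d2 f z :=
  (hf.hasDerivAt_d2.mul hf.hasDerivAt_d2).deriv.trans (by ring)

lemma d1_eq_of_eqOn (hfg : EqOn f g U) (hU : IsOpen U) (hz : z ∈ U) : d1 f z = d1 g z := by
  refine EventuallyEq.deriv_eq ?_
  filter_upwards [(continuous_id.prodMk continuous_const).continuousAt.preimage_mem_nhds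
    (hU.mem_nhds hz)] with s hs using hfg hs

lemma d2_eq_of_eqOn (hfg : EqOn f g U) (hU : IsOpen U) (hz : z ∈ U) : d2 f z = d2 g z := by
  refine EventuallyEq.deriv_eq ?_
  filter_upwards [(continuous_const.prodMk continuous_id).continuousAt.preimage_mem_nhds
    (hU.mem_nhds hz)] with s hs using hfg hs

lemma ContDiffOn.differentiableAt_of_isOpen (hf : ContDiffOn ℝ (⊤ : ℕ∞) f U) (hU : IsOpen U)
    (hz : z ∈ U) : DifferentiableAt ℝ f z :=
  (hf.contDiffAt (hU.mem_nhds hz)).differentiableAt (by simp)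

lemma ContDiffOn.d2 (hf : ContDiffOn ℝ (⊤ : ℕ∞) f U) (hU : IsOpen U) :
    ContDiffOn ℝ (⊤ : ℕ∞) (d2 f) U :=
  ((hf.fderiv_of_isOpen hU le_rfl).clm_apply contDiffOn_const).congr fun _ hz =>
    d2_eq_fderiv (hf.differentiableAt_of_isOpen hU hz)

end PartialDerivatives

section Burgers

variable {h g : ℝ × ℝ → ℝ} {U : Set (ℝ × ℝ)}

lemma IsRedSolOn.isBurgersSolOn {w : ℝ × ℝ → ℝ} (hw : IsRedSolOn w U) (hU : IsOpen U) :
    IsBurgersSolOn (d2 (d2 w)) U :=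
  ⟨(hw.1.d2 hU).d2 hU, hw.2⟩

lemma IsBurgersSolOn.congr (hh : IsBurgersSolOn h U) (hU : IsOpen U) (hhg : EqOn h g U) :
    IsBurgersSolOn g U := by
  refine ⟨hh.1.congr fun z hz => (hhg hz).symm, fun z hz => ?_⟩
  rw [← d1_eq_of_eqOn hhg hU hz, ← d2_eq_of_eqOn hhg hU hz, ← hhg hz]
  exact hh.2 z hz

theorem IsBurgersSolOn.comp_galilean (hh : IsBurgersSolOn h U) (hU : IsOpen U) (c : ℝ) :
    IsBurgersSolOn (fun z => h (z.1, z.2 + c * z.1) - c) {z | (z.1, z.2 + c * z.1) ∈ U} := by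
  refine ⟨(hh.1.comp (f := fun z : ℝ × ℝ => (z.1, z.2 + c * z.1)) (by fun_prop)
    fun z hz => hz).sub contDiffOn_const, fun z hz => ?_⟩
  have hd := hh.1.differentiableAt_of_isOpen hU hz
  have e1 := (hasDerivAt_comp_prodMk hd (hasDerivAt_id' z.1)
    (((hasDerivAt_id' z.1).const_mul c).const_add z.2)).sub_const c
  have e2 := (hasDerivAt_comp_prodMk hd (hasDerivAt_const z.2 z.1)
    ((hasDerivAt_id' z.2).add_const (c * z.1))).sub_const c
  simp only [d1, d2]
  rw [e1.deriv, e2.deriv]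
  linear_combination hh.2 _ hz

theorem IsBurgersSolOn.comp_inversion (hh : IsBurgersSolOn h U) (hU : IsOpen U) (c : ℝ) :
    IsBurgersSolOn (fun z => (z.2 - h (1 / z.1, z.2 / z.1 + c)) / z.1)
      {z | z.1 ≠ 0 ∧ (1 / z.1, z.2 / z.1 + c) ∈ U} := by
  refine ⟨?_, fun z hz => ?_⟩
  · refine (contDiffOn_snd.sub (hh.1.comp (f := fun z : ℝ × ℝ => (1 / z.1, z.2 / z.1 + c))
      ?_ fun z hz => hz.2)).div contDiffOn_fst fun z hz => hz.1
    fun_prop (disch := exact fun z hz => hz.1)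
  obtain ⟨hz1, hzU⟩ := hz
  have hd := hh.1.differentiableAt_of_isOpen hU hzU
  have e1 := ((hasDerivAt_comp_prodMk hd
    ((hasDerivAt_const z.1 1).fun_div (hasDerivAt_id' z.1) hz1)
    (((hasDerivAt_const z.1 z.2).fun_div (hasDerivAt_id' z.1) hz1).add_const c)).const_sub
      z.2).fun_div (hasDerivAt_id' z.1) hz1
  have e2 := ((hasDerivAt_id' z.2).fun_sub (hasDerivAt_comp_prodMk hd
    (hasDerivAt_const z.2 (1 / z.1)) (((hasDerivAt_id' z.2).div_const z.1).add_const c))).div_const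
      z.1
  have hburgers : d1 h (1 / z.1, z.2 / z.1 + c) =
      -(h (1 / z.1, z.2 / z.1 + c) * d2 h (1 / z.1, z.2 / z.1 + c)) := by
    linear_combination hh.2 _ hzU
  simp only [d1, d2]
  rw [e1.deriv, e2.deriv, hburgers]
  field_simp
  ring

end Burgers

section ReducedEquation

variable {w : ℝ × ℝ → ℝ} {U : Set (ℝ × ℝ)}

theorem IsRedSolOn.comp_galilean (hw : IsRedSolOn w U) (hU : IsOpen U) (c : ℝ) :
    IsRedSolOn (fun z => w (z.1, z.2 + c * z.1) - c / 2 * z.2 ^ 2)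
      {z | (z.1, z.2 + c * z.1) ∈ U} := by
  have hV : IsOpen {z : ℝ × ℝ | (z.1, z.2 + c * z.1) ∈ U} := hU.preimage (by fun_prop)
  have hd2w := hw.1.d2 hU
  have h1 : EqOn (d2 fun z => w (z.1, z.2 + c * z.1) - c / 2 * z.2 ^ 2)
      (fun z => d2 w (z.1, z.2 + c * z.1) - c * z.2) {z | (z.1, z.2 + c * z.1) ∈ U} := by
    intro z hz
    have hd : DifferentiableAt ℝ w (z.1, z.2 + c * z.1) := hw.1.differentiableAt_of_isOpen hU hz
    have e := (hasDerivAt_comp_prodMk hd (hasDerivAt_const z.2 z.1)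
      ((hasDerivAt_id' z.2).add_const (c * z.1))).fun_sub
      (((hasDerivAt_id' z.2).fun_pow 2).const_mul (c / 2))
    exact e.deriv.trans (by ring)
  have h2 : EqOn (d2 (d2 fun z => w (z.1, z.2 + c * z.1) - c / 2 * z.2 ^ 2))
      (fun z => d2 (d2 w) (z.1, z.2 + c * z.1) - c) {z | (z.1, z.2 + c * z.1) ∈ U} := by
    intro z hz
    rw [d2_eq_of_eqOn h1 hV hz]
    have hd : DifferentiableAt ℝ (d2 w) (z.1, z.2 + c * z.1) :=
      hd2w.differentiableAt_of_isOpen hU hz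
    have e := (hasDerivAt_comp_prodMk hd (hasDerivAt_const z.2 z.1)
      ((hasDerivAt_id' z.2).add_const (c * z.1))).fun_sub ((hasDerivAt_id' z.2).const_mul c)
    exact e.deriv.trans (by ring)
  refine ⟨(hw.1.comp (f := fun z : ℝ × ℝ => (z.1, z.2 + c * z.1)) (by fun_prop)
    fun z hz => hz).sub (by fun_prop), ?_⟩
  exact (((hw.isBurgersSolOn hU).comp_galilean hU c).congr hV h2.symm).2

theorem IsRedSolOn.comp_inversion (hw : IsRedSolOn w U) (hU : IsOpen U) (c : ℝ) :
    IsRedSolOn (fun z => -z.1 * w (1 / z.1, z.2 / z.1 + c) + z.2 ^ 3 / (6 * z.1))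
      {z | z.1 ≠ 0 ∧ (1 / z.1, z.2 / z.1 + c) ∈ U} := by
  have hφ : ContDiffOn ℝ (⊤ : ℕ∞) (fun z : ℝ × ℝ => (1 / z.1, z.2 / z.1 + c)) {z | z.1 ≠ 0} := by
    fun_prop (disch := exact fun z hz => hz)
  have hV : IsOpen {z : ℝ × ℝ | z.1 ≠ 0 ∧ (1 / z.1, z.2 / z.1 + c) ∈ U} :=
    hφ.continuousOn.isOpen_inter_preimage (isOpen_ne_fun continuous_fst continuous_const) hU
  have hd2w := hw.1.d2 hU
  have h1 : EqOn (d2 fun z => -z.1 * w (1 / z.1, z.2 / z.1 + c) + z.2 ^ 3 / (6 * z.1))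
      (fun z => -d2 w (1 / z.1, z.2 / z.1 + c) + z.2 ^ 2 / (2 * z.1))
      {z | z.1 ≠ 0 ∧ (1 / z.1, z.2 / z.1 + c) ∈ U} := by
    rintro z ⟨hz1, hzU⟩
    have hd : DifferentiableAt ℝ w (1 / z.1, z.2 / z.1 + c) :=
      hw.1.differentiableAt_of_isOpen hU hzU
    have e := ((hasDerivAt_comp_prodMk hd (hasDerivAt_const z.2 (1 / z.1))
      (((hasDerivAt_id' z.2).div_const z.1).add_const c)).const_mul (-z.1)).fun_add
      (((hasDerivAt_id' z.2).fun_pow 3).div_const (6 * z.1))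
    refine e.deriv.trans ?_
    field_simp
    ring
  have h2 : EqOn (d2 (d2 fun z => -z.1 * w (1 / z.1, z.2 / z.1 + c) + z.2 ^ 3 / (6 * z.1)))
      (fun z => (z.2 - d2 (d2 w) (1 / z.1, z.2 / z.1 + c)) / z.1)
      {z | z.1 ≠ 0 ∧ (1 / z.1, z.2 / z.1 + c) ∈ U} := by
    intro z hz
    rw [d2_eq_of_eqOn h1 hV hz]
    have hd : DifferentiableAt ℝ (d2 w) (1 / z.1, z.2 / z.1 + c) :=
      hd2w.differentiableAt_of_isOpen hU hz.2
    have e := (hasDerivAt_comp_prodMk hd (hasDerivAt_const z.2 (1 / z.1))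
      (((hasDerivAt_id' z.2).div_const z.1).add_const c)).neg.fun_add
      (((hasDerivAt_id' z.2).fun_pow 2).div_const (2 * z.1))
    refine e.deriv.trans ?_
    field_simp
    ring
  refine ⟨(contDiffOn_fst.neg.mul (hw.1.comp (hφ.mono fun z hz => hz.1) fun z hz => hz.2)).add
    ((contDiffOn_snd.pow 3).div (contDiffOn_const.mul contDiffOn_fst) fun z hz => by
      simpa using hz.1), ?_⟩
  exact (((hw.isBurgersSolOn hU).comp_inversion hU c).congr hV h2.symm).2

end ReducedEquation

section Reduction

variable (ρ κ b : ℝ)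

noncomputable def reductionVars (p : ℝ × ℝ × ℝ) : ℝ × ℝ := (κ * p.1 + b, p.2.2 / ρ - p.2.1)

lemma contDiff_reductionVars : ContDiff ℝ (⊤ : ℕ∞) (reductionVars ρ κ b) := by
  unfold reductionVars
  fun_prop

/- The next three identities need no differentiability: `deriv` of a function composed with an
affine map is the rescaled `deriv`, junk value `0` included. -/

lemma Dt_comp_reductionVars (G : ℝ × ℝ → ℝ) :
    Dt (G ∘ reductionVars ρ κ b) = (κ • d1 G) ∘ reductionVars ρ κ b := by
  funext p
  have h := deriv_comp_mul_left κ (fun v => G (v + b, p.2.2 / ρ - p.2.1)) p.1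
  rwa [deriv_comp_add_const (f := fun v => G (v, p.2.2 / ρ - p.2.1))] at h

lemma Dx_comp_reductionVars (G : ℝ × ℝ → ℝ) :
    Dx (G ∘ reductionVars ρ κ b) = (-d2 G) ∘ reductionVars ρ κ b :=
  funext fun p => deriv_comp_const_sub (f := fun v => G (κ * p.1 + b, v)) (a := p.2.2 / ρ)
    (x := p.2.1)

lemma Dy_comp_reductionVars (G : ℝ × ℝ → ℝ) :
    Dy (G ∘ reductionVars ρ κ b) = (ρ⁻¹ • d2 G) ∘ reductionVars ρ κ b := by
  funext p
  have h := deriv_comp_mul_left ρ⁻¹ (fun v => G (κ * p.1 + b, v - p.2.1)) p.2.2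
  rw [deriv_comp_sub_const (f := fun v => G (κ * p.1 + b, v))] at h
  show deriv (fun s => G (κ * p.1 + b, s / ρ - p.2.1)) p.2.2 =
    ρ⁻¹ • deriv (fun v => G (κ * p.1 + b, v)) (p.2.2 / ρ - p.2.1)
  simpa only [div_eq_inv_mul] using h

variable {ρ κ b}

theorem IsRedSolOn.isDNSolOn_comp_reductionVars (hρ : ρ ≠ 0) (hκ : κ = 2 * (ρ ^ 3 - 1) / ρ ^ 3)
    {F : ℝ × ℝ → ℝ} {U : Set (ℝ × ℝ)} (hF : IsRedSolOn F U) (hU : IsOpen U)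
    {D : Set (ℝ × ℝ × ℝ)} (hD : MapsTo (reductionVars ρ κ b) D U) :
    IsDNSolOn (F ∘ reductionVars ρ κ b) D := by
  set L := reductionVars ρ κ b with hL
  set h := d2 (d2 F)
  refine ⟨hF.1.comp (contDiff_reductionVars ρ κ b).contDiffOn hD, fun p hp => ?_⟩
  have hB := hF.isBurgersSolOn hU
  have hh : DifferentiableAt ℝ h (L p) := hB.1.differentiableAt_of_isOpen hU (hD hp)
  have hburgers : d1 h (L p) = -(h (L p) * d2 h (L p)) := by
    linear_combination hB.2 (L p) (hD hp)
  have hκρ : κ * ρ⁻¹ = 2 * (ρ⁻¹ - ρ⁻¹ ^ 4) := by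
    rw [hκ]
    field_simp
  have hDxDx : Dx (Dx (F ∘ L)) = h ∘ L := by
    rw [Dx_comp_reductionVars, Dx_comp_reductionVars, d2_neg, neg_neg]
  have hDxDy : Dx (Dy (F ∘ L)) = (-(ρ⁻¹ • h)) ∘ L := by
    rw [Dy_comp_reductionVars, Dx_comp_reductionVars, d2_smul]
  have hDyDy : Dy (Dy (F ∘ L)) = (ρ⁻¹ • ρ⁻¹ • h) ∘ L := by
    rw [Dy_comp_reductionVars, Dy_comp_reductionVars, d2_smul]
  have hx : (fun q => Dx (Dx (F ∘ L)) q * Dx (Dy (F ∘ L)) q) = (-ρ⁻¹ • (h * h)) ∘ L := by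
    rw [hDxDx, hDxDy]
    funext q
    simp only [Function.comp_apply, Pi.smul_apply, Pi.neg_apply, Pi.mul_apply, smul_eq_mul]
    ring
  have hy : (fun q => Dx (Dy (F ∘ L)) q * Dy (Dy (F ∘ L)) q) = (-ρ⁻¹ ^ 3 • (h * h)) ∘ L := by
    rw [hDxDy, hDyDy]
    funext q
    simp only [Function.comp_apply, Pi.smul_apply, Pi.neg_apply, Pi.mul_apply, smul_eq_mul]
    ring
  rw [hx, hy, hDxDy, Dt_comp_reductionVars, Dx_comp_reductionVars, Dy_comp_reductionVars]
  simp only [Function.comp_apply, Pi.smul_apply, Pi.neg_apply, d1_neg, d1_smul, d2_smul,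
    smul_eq_mul, ← hL, d2_mul_self hh, hburgers]
  linear_combination (h (L p) * d2 h (L p)) * hκρ

end Reduction

theorem statement5_general (ρ : ℝ) (hρ0 : ρ ≠ 0) (κ : ℝ)
    (hκ : κ = 2 * (ρ ^ 3 - 1) / ρ ^ 3) (b : ℝ)
    (w : ℝ × ℝ → ℝ) (hw : ContDiff ℝ (⊤ : ℕ∞) w)
    (hweq : ∀ p, d1 (d2 (d2 w)) p + d2 (d2 w) p * d2 (d2 (d2 w)) p = 0)
    (c₅ : ℝ) :
    IsDNSolOn (fun p : ℝ × ℝ × ℝ =>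
        w (κ * p.1 + b, (p.2.2 / ρ - p.2.1) + c₅ * (κ * p.1 + b))
          - c₅ / 2 * (p.2.2 / ρ - p.2.1) ^ 2) Set.univ ∧
    IsDNSolOn (fun p : ℝ × ℝ × ℝ =>
        -(κ * p.1 + b) * w (1 / (κ * p.1 + b), (p.2.2 / ρ - p.2.1) / (κ * p.1 + b) + c₅)
          + (p.2.2 / ρ - p.2.1) ^ 3 / (6 * (κ * p.1 + b)))
      {p : ℝ × ℝ × ℝ | κ * p.1 + b ≠ 0} := by
  have hred : IsRedSolOn w univ := ⟨hw.contDiffOn, fun p _ => hweq p⟩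
  constructor
  · refine (hred.comp_galilean isOpen_univ c₅).isDNSolOn_comp_reductionVars hρ0 hκ ?_
      fun _ _ => mem_univ _
    simp
  · refine (hred.comp_inversion isOpen_univ c₅).isDNSolOn_comp_reductionVars hρ0 hκ ?_
      fun _ hp => ⟨hp, mem_univ _⟩
    simpa using isOpen_ne_fun continuous_fst continuous_const

/-- Constant-`ρ` case: two families of solutions of the dispersionless
Nyzhnyk equation obtained out of a smooth solution `w` of the reduced equation. -/
theorem statement5 (ρ : ℝ) (hρ0 : ρ ≠ 0) (hρ1 : ρ ≠ 1) (κ : ℝ)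
    (hκ : κ = 2 * (ρ ^ 3 - 1) / ρ ^ 3) (b : ℝ)
    (w : ℝ × ℝ → ℝ) (hw : ContDiff ℝ (⊤ : ℕ∞) w)
    (hweq : ∀ p, d1 (d2 (d2 w)) p + d2 (d2 w) p * d2 (d2 (d2 w)) p = 0)
    (c₅ : ℝ) :
    IsDNSolOn (fun p : ℝ × ℝ × ℝ =>
        w (κ * p.1 + b, (p.2.2 / ρ - p.2.1) + c₅ * (κ * p.1 + b))
          - c₅ / 2 * (p.2.2 / ρ - p.2.1) ^ 2) Set.univ ∧
    IsDNSolOn (fun p : ℝ × ℝ × ℝ =>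
        -(κ * p.1 + b) * w (1 / (κ * p.1 + b), (p.2.2 / ρ - p.2.1) / (κ * p.1 + b) + c₅)
          + (p.2.2 / ρ - p.2.1) ^ 3 / (6 * (κ * p.1 + b)))
      {p : ℝ × ℝ × ℝ | κ * p.1 + b ≠ 0} :=
  statement5_general ρ hρ0 κ hκ b w hw hweq c₅
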